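/- arXiv:1310.3066 — 6 statements merged into one kernel-verified Lean document; each statement's English description precedes it below -/
import Mathlib

section
/- Let ι and κ be finite nonempty types, let g : ι → κ be a surjection, and let F be the induced linear projection. For every y ∈ stdSimplex ℝ κ with all coordinates positive (i.e. ∀ j, 0 < y j), the fiber {x ∈ stdSimplex ℝ ι | F x = y}, with the subspace topology from ι → ℝ, is homeomorphic to the product ∏_{j : κ} stdSimplex ℝ {i : ι // g i = j}. In particular all fibers of F over interior points of the target simplex are homeomorphic to each other. -/
/-!
Over a point `y` with positive coordinates, a point `x` of the fiber is determined by its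
restrictions to the vertex fibers `g⁻¹ j`; each restriction has total mass `y j`, so dividing
by `y j` lands in the simplex on `g⁻¹ j`. Multiplying back by `y (g i)` inverts this, and both
maps are coordinatewise continuous.
-/

open Finset

namespace SimplicialProj

variable {ι κ : Type*} [Fintype ι] [DecidableEq κ]

noncomputable def proj (g : ι → κ) (x : ι → ℝ) (j : κ) : ℝ :=
  ∑ i : {i // g i = j}, x i

lemma proj_eq_sum_filter (g : ι → κ) (x : ι → ℝ) (j : κ) :
    proj g x j = ∑ i ∈ univ.filter (fun i => g i = j), x i :=
  (sum_subtype _ (by simp) x).symm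

lemma sum_proj [Fintype κ] (g : ι → κ) (x : ι → ℝ) : ∑ j, proj g x j = ∑ i, x i :=
  Fintype.sum_fiberwise g x

variable {g : ι → κ} {y : κ → ℝ}

lemma div_restrict_mem_stdSimplex {x : ι → ℝ} (hx : ∀ i, 0 ≤ x i) {j : κ}
    (hxj : proj g x j = y j) (hyj : 0 < y j) :
    (fun i : {i // g i = j} => x i / y j) ∈ stdSimplex ℝ {i // g i = j} :=
  ⟨fun i => div_nonneg (hx i) hyj.le, by rw [← sum_div, ← proj, hxj, div_self hyj.ne']⟩

noncomputable def scaledJoin (y : κ → ℝ) (z : ∀ j, stdSimplex ℝ {i // g i = j}) :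
    ι → ℝ := fun i => y (g i) * (z (g i)).1 ⟨i, rfl⟩

lemma proj_scaledJoin (z : ∀ j, stdSimplex ℝ {i // g i = j}) (j : κ) :
    proj g (scaledJoin y z) j = y j := by
  have restrict : ∀ i : {i // g i = j}, scaledJoin y z i = y j * (z j).1 i := by
    rintro ⟨i, rfl⟩
    rfl
  rw [proj, sum_congr rfl fun i _ => restrict i, ← mul_sum, (z j).2.2, mul_one]

lemma continuous_scaledJoin : Continuous (scaledJoin (g := g) y) :=
  continuous_pi fun i => continuous_const.mul <|
    (continuous_apply (⟨i, rfl⟩ : {i' // g i' = g i})).comp <|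
      continuous_subtype_val.comp (continuous_apply (g i))

variable [Fintype κ]

lemma scaledJoin_mem_stdSimplex (hy : y ∈ stdSimplex ℝ κ)
    (z : ∀ j, stdSimplex ℝ {i // g i = j}) :
    scaledJoin y z ∈ stdSimplex ℝ ι := by
  refine ⟨fun i => mul_nonneg (hy.1 (g i)) ((z (g i)).2.1 _), ?_⟩
  rw [← sum_proj g, Fintype.sum_congr _ _ (proj_scaledJoin z), hy.2]

noncomputable def fiberHomeomorphPi (hy : y ∈ stdSimplex ℝ κ) (hypos : ∀ j, 0 < y j) :
    ({x ∈ stdSimplex ℝ ι | proj g x = y} : Set (ι → ℝ)) ≃ₜ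
      ∀ j, stdSimplex ℝ {i // g i = j} where
  toFun x j := ⟨_, div_restrict_mem_stdSimplex x.2.1.1 (congrFun x.2.2 j) (hypos j)⟩
  invFun z := ⟨scaledJoin y z, scaledJoin_mem_stdSimplex hy z, funext (proj_scaledJoin z)⟩
  left_inv x := Subtype.ext <| funext fun i => mul_div_cancel₀ _ (hypos (g i)).ne'
  right_inv z := funext fun j => Subtype.ext <| funext fun ⟨i, hi⟩ => by
    subst hi
    exact mul_div_cancel_left₀ _ (hypos (g i)).ne'
  continuous_toFun := continuous_pi fun j => Continuous.subtype_mk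
    (continuous_pi fun i => ((continuous_apply i.1).comp continuous_subtype_val).div_const _) _
  continuous_invFun := continuous_scaledJoin.subtype_mk _

end SimplicialProj

open SimplicialProj in
theorem fiber_homeomorph_pi_stdSimplex_general
    {ι κ : Type*} [Fintype ι] [Fintype κ] [DecidableEq κ]
    (g : ι → κ)
    (F : (ι → ℝ) → (κ → ℝ))
    (hF : ∀ x j, F x j = ∑ i ∈ Finset.univ.filter (fun i => g i = j), x i)
    (y : κ → ℝ) (hy : y ∈ stdSimplex ℝ κ) (hypos : ∀ j, 0 < y j) :
    Nonempty (({x ∈ stdSimplex ℝ ι | F x = y} : Set (ι → ℝ)) ≃ₜ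
      (∀ j : κ, (stdSimplex ℝ {i : ι // g i = j} : Set ({i : ι // g i = j} → ℝ)))) := by
  obtain rfl : F = proj g := funext₂ fun x j => (hF x j).trans (proj_eq_sum_filter g x j).symm
  exact ⟨fiberHomeomorphPi hy hypos⟩

/-- The fiber of the induced simplicial projection over an interior
point of the target simplex is homeomorphic to the product of the vertex fibers
`∏ j, stdSimplex ℝ {i // g i = j}`. -/
theorem fiber_homeomorph_pi_stdSimplex
    {ι κ : Type*} [Fintype ι] [Fintype κ] [Nonempty ι] [Nonempty κ] [DecidableEq κ]
    (g : ι → κ) (hg : Function.Surjective g)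
    (F : (ι → ℝ) → (κ → ℝ))
    (hF : ∀ x j, F x j = ∑ i ∈ Finset.univ.filter (fun i => g i = j), x i)
    (y : κ → ℝ) (hy : y ∈ stdSimplex ℝ κ) (hypos : ∀ j, 0 < y j) :
    Nonempty (({x ∈ stdSimplex ℝ ι | F x = y} : Set (ι → ℝ)) ≃ₜ
      (∀ j : κ, (stdSimplex ℝ {i : ι // g i = j} : Set ({i : ι // g i = j} → ℝ)))) :=
  fiber_homeomorph_pi_stdSimplex_general g F hF y hy hypos
end

section
/- Let ι and κ be finite nonempty types, let g : ι → κ be a surjection, and let F be the induced linear projection. Let b ∈ stdSimplex ℝ κ be the barycenter, b j = 1 / (card κ) for all j. Then there is a homeomorphism from {x ∈ stdSimplex ℝ ι | ∀ j, 0 < (F x) j} (the preimage under F of the open simplex) onto the product {x ∈ stdSimplex ℝ ι | F x = b} × {y ∈ stdSimplex ℝ κ | ∀ j, 0 < y j}, whose second component is the map F itself. -/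
set_option linter.unusedSectionVars false

open Finset

section aux

variable {ι κ : Type*} [Fintype ι] [Fintype κ] [DecidableEq κ]

private def Fmap (g : ι → κ) (x : ι → ℝ) (j : κ) : ℝ :=
  ∑ i ∈ Finset.univ.filter (fun i => g i = j), x i

private lemma Fmap_sum (g : ι → κ) (x : ι → ℝ) : ∑ j, Fmap g x j = ∑ i, x i :=
  Finset.sum_fiberwise_of_maps_to (fun i _ => Finset.mem_univ (g i)) x

private lemma Fmap_mul_comp (g : ι → κ) (x : ι → ℝ) (c : κ → ℝ) (j : κ) :
    Fmap g (fun i => x i * c (g i)) j = Fmap g x j * c j := by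
  unfold Fmap
  have h : ∀ i ∈ Finset.univ.filter (fun i => g i = j), x i * c (g i) = x i * c j :=
    fun i hi => by rw [(Finset.mem_filter.mp hi).2]
  rw [Finset.sum_congr rfl h, ← Finset.sum_mul]

private lemma Fmap_nonneg (g : ι → κ) {x : ι → ℝ} (hx : ∀ i, 0 ≤ x i) (j : κ) :
    0 ≤ Fmap g x j :=
  Finset.sum_nonneg fun i _ => hx i

private lemma Fmap_cont (g : ι → κ) : Continuous (Fmap g) := by
  refine continuous_pi fun j => ?_
  exact continuous_finset_sum _ fun i _ => continuous_apply i

end aux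

/-- The preimage under the induced simplicial projection of the open
simplex is homeomorphic to the product of the fiber over the barycenter and the
open simplex, via a homeomorphism whose second component is `F` itself. -/
theorem preimage_open_simplex_homeomorph_fiber_prod
    {ι κ : Type*} [Fintype ι] [Fintype κ] [Nonempty ι] [Nonempty κ] [DecidableEq κ]
    (g : ι → κ) (hg : Function.Surjective g)
    (F : (ι → ℝ) → (κ → ℝ))
    (hF : ∀ x j, F x j = ∑ i ∈ Finset.univ.filter (fun i => g i = j), x i)
    (b : κ → ℝ) (hb : ∀ j, b j = 1 / (Fintype.card κ)) :
    ∃ e : ({x ∈ stdSimplex ℝ ι | ∀ j, 0 < F x j} : Set (ι → ℝ)) ≃ₜ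
        (({x ∈ stdSimplex ℝ ι | F x = b} : Set (ι → ℝ)) ×
          ({y ∈ stdSimplex ℝ κ | ∀ j, 0 < y j} : Set (κ → ℝ))),
      ∀ x, ((e x).2 : κ → ℝ) = F (x : ι → ℝ) := by
  classical
  have hFeq : F = Fmap g := funext fun x => funext fun j => hF x j
  subst hFeq
  have hbpos : ∀ j, 0 < b j := fun j => by
    rw [hb]; positivity
  have hbsum : ∑ j, b j = 1 := by
    simp only [hb]
    rw [Finset.sum_const, Finset.card_univ, nsmul_eq_mul]
    field_simp
  -- forward map
  set A := ({x ∈ stdSimplex ℝ ι | ∀ j, 0 < Fmap g x j} : Set (ι → ℝ)) with hA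
  set B := ({x ∈ stdSimplex ℝ ι | Fmap g x = b} : Set (ι → ℝ)) with hB
  set C := ({y ∈ stdSimplex ℝ κ | ∀ j, 0 < y j} : Set (κ → ℝ)) with hC
  have memA : ∀ x ∈ A, (∀ i, 0 ≤ x i) ∧ (∑ i, x i = 1) ∧ (∀ j, 0 < Fmap g x j) := by
    intro x hx
    obtain ⟨hx1, hx2⟩ := hx
    exact ⟨hx1.1, hx1.2, hx2⟩
  have fwd1 : ∀ x ∈ A, (fun i => x i * (b (g i) / Fmap g x (g i))) ∈ B := by
    intro x hx
    obtain ⟨hx0, hx1, hxpos⟩ := memA x hx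
    have hFmap : ∀ j, Fmap g (fun i => x i * (b (g i) / Fmap g x (g i))) j = b j := by
      intro j
      rw [Fmap_mul_comp g x (fun j => b j / Fmap g x j) j, mul_comm]
      exact div_mul_cancel₀ _ (hxpos j).ne'
    refine ⟨⟨fun i => ?_, ?_⟩, funext hFmap⟩
    · exact mul_nonneg (hx0 i) (div_nonneg (hbpos _).le (hxpos _).le)
    · rw [← Fmap_sum g]
      simp only [hFmap]
      exact hbsum
  have fwd2 : ∀ x ∈ A, Fmap g x ∈ C := by
    intro x hx
    obtain ⟨hx0, hx1, hxpos⟩ := memA x hx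
    refine ⟨⟨fun j => (hxpos j).le, ?_⟩, hxpos⟩
    rw [Fmap_sum g]; exact hx1
  have bwd : ∀ z ∈ B, ∀ w ∈ C, (fun i => z i * (w (g i) / b (g i))) ∈ A := by
    intro z hz w hw
    obtain ⟨⟨hz0, hz1⟩, hzF⟩ := hz
    obtain ⟨⟨hw0, hw1⟩, hwpos⟩ := hw
    have hFmap : ∀ j, Fmap g (fun i => z i * (w (g i) / b (g i))) j = w j := by
      intro j
      rw [Fmap_mul_comp g z (fun j => w j / b j) j, hzF, mul_comm]
      exact div_mul_cancel₀ _ (hbpos j).ne'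
    refine ⟨⟨fun i => ?_, ?_⟩, fun j => by rw [hFmap j]; exact hwpos j⟩
    · exact mul_nonneg (hz0 i) (div_nonneg (hw0 _) (hbpos _).le)
    · rw [← Fmap_sum g]
      simp only [hFmap]
      exact hw1
  refine ⟨Homeomorph.mk
    { toFun := fun x => (⟨fun i => x.1 i * (b (g i) / Fmap g x.1 (g i)), fwd1 x.1 x.2⟩,
        ⟨Fmap g x.1, fwd2 x.1 x.2⟩)
      invFun := fun p => ⟨fun i => p.1.1 i * (p.2.1 (g i) / b (g i)),
        bwd p.1.1 p.1.2 p.2.1 p.2.2⟩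
      left_inv := ?_
      right_inv := ?_ } ?_ ?_, fun x => rfl⟩
  · intro x
    obtain ⟨hx0, hx1, hxpos⟩ := memA x.1 x.2
    ext i
    simp only
    field_simp [(hxpos (g i)).ne', (hbpos (g i)).ne']
  · intro p
    obtain ⟨⟨hz0, hz1⟩, hzF⟩ := p.1.2
    obtain ⟨⟨hw0, hw1⟩, hwpos⟩ := p.2.2
    have hFmap : ∀ j, Fmap g (fun i => p.1.1 i * (p.2.1 (g i) / b (g i))) j = p.2.1 j := by
      intro j
      rw [Fmap_mul_comp g p.1.1 (fun j => p.2.1 j / b j) j, hzF, mul_comm]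
      exact div_mul_cancel₀ _ (hbpos j).ne'
    refine Prod.ext (Subtype.ext ?_) (Subtype.ext ?_)
    · ext i
      simp only [hFmap]
      field_simp [(hbpos (g i)).ne', (hwpos (g i)).ne']
    · exact funext hFmap
  · refine Continuous.prodMk ?_ ?_
    · refine Continuous.subtype_mk ?_ _
      refine continuous_pi fun i => ?_
      refine ((continuous_apply i).comp continuous_subtype_val).mul ?_
      refine Continuous.div continuous_const ?_ ?_
      · exact ((continuous_apply (g i)).comp (Fmap_cont g)).comp continuous_subtype_val
      · intro x
        exact (x.2.2 (g i)).ne'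
    · exact Continuous.subtype_mk ((Fmap_cont g).comp continuous_subtype_val) _
  · refine Continuous.subtype_mk ?_ _
    refine continuous_pi fun i => ?_
    refine Continuous.mul ?_ ?_
    · exact (continuous_apply i).comp (continuous_subtype_val.comp continuous_fst)
    · refine Continuous.div ?_ continuous_const fun _ => (hbpos (g i)).ne'
      exact (continuous_apply (g i)).comp (continuous_subtype_val.comp continuous_snd)
end

section
/- Let ι and κ be finite nonempty types, let g : ι → κ be a surjection, and let F be the induced linear projection. If y, y' ∈ stdSimplex ℝ κ have the same support, i.e. for every j, 0 < y j if and only if 0 < y' j, then the fibers {x ∈ stdSimplex ℝ ι | F x = y} and {x ∈ stdSimplex ℝ ι | F x = y'} are homeomorphic (with the subspace topology from ι → ℝ). -/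
private lemma fiber_zero' {ι κ : Type*} [Fintype ι] [Fintype κ] [DecidableEq κ]
    (g : ι → κ) (F : (ι → ℝ) → (κ → ℝ))
    (hF : ∀ x j, F x j = ∑ i ∈ Finset.univ.filter (fun i => g i = j), x i)
    (y : κ → ℝ) (x : ι → ℝ) (hx1 : x ∈ stdSimplex ℝ ι) (hx2 : F x = y)
    (i : ι) (h0 : y (g i) = 0) : x i = 0 := by
  have h := hF x (g i)
  rw [hx2, h0] at h
  have := (Finset.sum_eq_zero_iff_of_nonneg (fun i _ => hx1.1 i)).mp h.symm
  exact this i (by simp)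

private lemma fiber_sum' {ι κ : Type*} [Fintype ι] [Fintype κ] [DecidableEq κ]
    (g : ι → κ) (F : (ι → ℝ) → (κ → ℝ))
    (hF : ∀ x j, F x j = ∑ i ∈ Finset.univ.filter (fun i => g i = j), x i)
    (y y' : κ → ℝ) (hy' : y' ∈ stdSimplex ℝ κ)
    (hz : ∀ j, y j = 0 → y' j = 0)
    (x : ι → ℝ) (hx2 : F x = y) (j : κ) :
    ∑ i ∈ Finset.univ.filter (fun i => g i = j), x i * (y' (g i) / y (g i)) = y' j := by
  have h1 : ∀ i ∈ Finset.univ.filter (fun i => g i = j),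
      x i * (y' (g i) / y (g i)) = x i * (y' j / y j) := by
    intro i hi
    rw [(Finset.mem_filter.mp hi).2]
  rw [Finset.sum_congr rfl h1, ← Finset.sum_mul, ← hF x j, hx2]
  by_cases h0 : y j = 0
  · rw [h0, hz j h0]; simp
  · field_simp

private lemma fiber_map' {ι κ : Type*} [Fintype ι] [Fintype κ] [DecidableEq κ]
    (g : ι → κ) (F : (ι → ℝ) → (κ → ℝ))
    (hF : ∀ x j, F x j = ∑ i ∈ Finset.univ.filter (fun i => g i = j), x i)
    (y y' : κ → ℝ) (hy : y ∈ stdSimplex ℝ κ) (hy' : y' ∈ stdSimplex ℝ κ)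
    (hz : ∀ j, y j = 0 → y' j = 0)
    (x : ι → ℝ) (hx1 : x ∈ stdSimplex ℝ ι) (hx2 : F x = y) :
    (fun i => x i * (y' (g i) / y (g i))) ∈ stdSimplex ℝ ι ∧
      F (fun i => x i * (y' (g i) / y (g i))) = y' := by
  have key := fiber_sum' g F hF y y' hy' hz x hx2
  refine ⟨⟨fun i => mul_nonneg (hx1.1 i) (div_nonneg (hy'.1 _) (hy.1 _)), ?_⟩, ?_⟩
  · have : ∑ j : κ, ∑ i ∈ Finset.univ.filter (fun i => g i = j),
        x i * (y' (g i) / y (g i)) = ∑ i : ι, x i * (y' (g i) / y (g i)) :=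
      Finset.sum_fiberwise_of_maps_to (fun i _ => Finset.mem_univ _) _
    rw [← this]
    simp only [key]
    exact hy'.2
  · funext j
    rw [hF]
    exact key j

/-- Fibers of the induced simplicial projection over two points of
the target simplex with the same support are homeomorphic. -/
theorem fibers_homeomorph_of_same_support
    {ι κ : Type*} [Fintype ι] [Fintype κ] [Nonempty ι] [Nonempty κ] [DecidableEq κ]
    (g : ι → κ) (hg : Function.Surjective g)
    (F : (ι → ℝ) → (κ → ℝ))
    (hF : ∀ x j, F x j = ∑ i ∈ Finset.univ.filter (fun i => g i = j), x i)
    (y y' : κ → ℝ) (hy : y ∈ stdSimplex ℝ κ) (hy' : y' ∈ stdSimplex ℝ κ)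
    (hsupp : ∀ j, 0 < y j ↔ 0 < y' j) :
    Nonempty (({x ∈ stdSimplex ℝ ι | F x = y} : Set (ι → ℝ)) ≃ₜ
      ({x ∈ stdSimplex ℝ ι | F x = y'} : Set (ι → ℝ))) := by
  have hz : ∀ j, y j = 0 → y' j = 0 := fun j h => by
    by_contra h'
    have := (hsupp j).mpr (lt_of_le_of_ne (hy'.1 j) (Ne.symm h'))
    linarith
  have hz' : ∀ j, y' j = 0 → y j = 0 := fun j h => by
    by_contra h'
    have := (hsupp j).mp (lt_of_le_of_ne (hy.1 j) (Ne.symm h'))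
    linarith
  refine ⟨{
    toFun := fun x => ⟨fun i => x.1 i * (y' (g i) / y (g i)), by
      obtain ⟨h1, h2⟩ := fiber_map' g F hF y y' hy hy' hz x.1 x.2.1 x.2.2
      exact ⟨h1, h2⟩⟩
    invFun := fun x => ⟨fun i => x.1 i * (y (g i) / y' (g i)), by
      obtain ⟨h1, h2⟩ := fiber_map' g F hF y' y hy' hy hz' x.1 x.2.1 x.2.2
      exact ⟨h1, h2⟩⟩
    left_inv := fun x => by
      ext i
      show x.1 i * (y' (g i) / y (g i)) * (y (g i) / y' (g i)) = x.1 i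
      by_cases h0 : y (g i) = 0
      · rw [fiber_zero' g F hF y x.1 x.2.1 x.2.2 i h0]; ring
      · have h0' : y' (g i) ≠ 0 := fun h => h0 (hz' _ h)
        field_simp
    right_inv := fun x => by
      ext i
      show x.1 i * (y (g i) / y' (g i)) * (y' (g i) / y (g i)) = x.1 i
      by_cases h0 : y' (g i) = 0
      · rw [fiber_zero' g F hF y' x.1 x.2.1 x.2.2 i h0]; ring
      · have h0' : y (g i) ≠ 0 := fun h => h0 (hz _ h)
        field_simp
    continuous_toFun := by
      refine Continuous.subtype_mk ?_ _
      exact continuous_pi fun i =>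
        ((continuous_apply i).comp continuous_subtype_val).mul continuous_const
    continuous_invFun := by
      refine Continuous.subtype_mk ?_ _
      exact continuous_pi fun i =>
        ((continuous_apply i).comp continuous_subtype_val).mul continuous_const }⟩
end

section
/- Let ι and κ be finite nonempty types, let g : ι → κ be a surjection, let F be the induced linear projection, and let J ⊊ κ be a nonempty proper subset. Define Ω = {x ∈ stdSimplex ℝ ι | (∀ j, 0 < (F x) j) or (∀ j, 0 < (F x) j ↔ j ∈ J)} and Σ = {x ∈ Ω | ∀ j, 0 < (F x) j ↔ j ∈ J}. Then Σ is a strong deformation retract of Ω: there exists a continuous map H : Ω × [0,1] → Ω with H(x,0) = x for all x ∈ Ω, H(x,1) ∈ Σ for all x ∈ Ω, and H(x,u) = x for all x ∈ Σ and all u ∈ [0,1]. -/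
/-!
A point `x` of the simplex on `ι` with `F x ∈ st(σ_J)` is a join `(1 - s) a + s b` of a point `a`
over the face `J` and a point `b` over the complementary face, with `s < 1` the mass of `x` lying
over `κ \ J`. Rescaling the coordinates over `κ \ J` by `1 - u` and renormalising shrinks `s` to
`0` as `u → 1`; since the rescaling factor is constant on the fibres of `g`, it commutes with `F`,
so the positivity pattern of `F x` is unchanged for `u < 1`, is exactly `J` at `u = 1`, and points
already over the open face (`s = 0`) never move.
-/

open Finset FunOnFinite unitInterval

section PushToFace

variable {α : Type*} [Fintype α] (S : Set α)

noncomputable def massOff (x : α → ℝ) : ℝ := ∑ i, Sᶜ.indicator x i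

/-- Writing a point of the simplex as `x = (1 - s) a + s b` with `a` on the face `S`, `b` on the
opposite face and `s = massOff S x`, this is `(1 - s') a + s' b` with `s' = (1 - u) s / (1 - u s)`. -/
noncomputable def pushToFace (u : ℝ) (x : α → ℝ) : α → ℝ :=
  (1 - u * massOff S x)⁻¹ • (x - u • Sᶜ.indicator x)

variable {S} {x : α → ℝ} {u : ℝ}

lemma pushToFace_apply (u : ℝ) (x : α → ℝ) (i : α) :
    pushToFace S u x i = (x i - u * Sᶜ.indicator x i) / (1 - u * massOff S x) := by
  simp [pushToFace, div_eq_inv_mul]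

@[simp]
lemma pushToFace_zero (x : α → ℝ) : pushToFace S 0 x = x := by
  simp [pushToFace]

lemma pushToFace_eq_self (hx : ∀ i ∉ S, x i = 0) (u : ℝ) : pushToFace S u x = x := by
  have hoff : Sᶜ.indicator x = 0 := funext fun i => Set.indicator_apply_eq_zero.2 (hx i)
  simp [pushToFace, massOff, hoff]

lemma massOff_nonneg (hx : ∀ i, 0 ≤ x i) : 0 ≤ massOff S x :=
  sum_nonneg fun i _ => Set.indicator_nonneg (fun j _ => hx j) i

lemma massOff_lt_one (hx : x ∈ stdSimplex ℝ α) {i : α} (hi : i ∈ S) (hxi : 0 < x i) :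
    massOff S x < 1 := by
  have hmassOn : x i ≤ ∑ j, S.indicator x j := by
    simpa [hi] using single_le_sum (f := S.indicator x)
      (fun j _ => Set.indicator_nonneg (fun k _ => hx.1 k) j) (mem_univ i)
  have hsplit : ∑ j, S.indicator x j + massOff S x = 1 := by
    simp only [massOff, ← sum_add_distrib, Set.indicator_self_add_compl_apply, hx.2]
  linarith

lemma one_sub_mul_massOff_pos (hx : ∀ i, 0 ≤ x i) (hm : massOff S x < 1) (hu : u ∈ I) :
    0 < 1 - u * massOff S x := by
  nlinarith [massOff_nonneg (S := S) hx, hu.1, hu.2]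

lemma sum_pushToFace (hx : ∑ i, x i = 1) (hd : 1 - u * massOff S x ≠ 0) :
    ∑ i, pushToFace S u x i = 1 := by
  simp only [pushToFace, Pi.smul_apply, Pi.sub_apply, smul_eq_mul, ← mul_sum, sum_sub_distrib,
    hx]
  rw [← massOff, inv_mul_cancel₀ hd]

lemma pushToFace_pos_iff (hxi : 0 ≤ x i) (hu : u ≤ 1) (hd : 0 < 1 - u * massOff S x) :
    0 < pushToFace S u x i ↔ 0 < x i ∧ (i ∈ S ∨ u < 1) := by
  rw [pushToFace_apply, div_pos_iff_of_pos_right hd]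
  by_cases hi : i ∈ S
  · simp [hi]
  · simp only [Set.indicator_of_mem (Set.mem_compl hi), hi, false_or]
    constructor
    · intro h
      constructor <;> nlinarith
    · rintro ⟨hxi, hu⟩
      nlinarith

lemma pushToFace_nonneg (hx : ∀ i, 0 ≤ x i) (hu : u ≤ 1) (hd : 0 < 1 - u * massOff S x)
    (i : α) : 0 ≤ pushToFace S u x i := by
  rw [pushToFace_apply]
  refine div_nonneg ?_ hd.le
  by_cases hi : i ∈ S
  · simp [hi, hx i]
  · simp only [Set.indicator_of_mem (Set.mem_compl hi)]
    nlinarith [hx i]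

lemma pushToFace_mem_stdSimplex (hx : x ∈ stdSimplex ℝ α) (hu : u ∈ I) (hm : massOff S x < 1) :
    pushToFace S u x ∈ stdSimplex ℝ α :=
  have hd := one_sub_mul_massOff_pos hx.1 hm hu
  ⟨pushToFace_nonneg hx.1 hu.2 hd, sum_pushToFace hx.2 hd.ne'⟩

lemma continuousOn_pushToFace :
    ContinuousOn (fun p : (α → ℝ) × ℝ => pushToFace S p.2 p.1)
      {p | 1 - p.2 * massOff S p.1 ≠ 0} := by
  classical
  have hoff : Continuous fun x : α → ℝ => Sᶜ.indicator x :=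
    continuous_pi fun i => by by_cases hi : i ∈ Sᶜ <;> simp [hi, continuous_apply, continuous_const]
  have hmass : Continuous (massOff S) := continuous_finsetSum _ fun i _ =>
    (continuous_apply i).comp hoff
  refine ContinuousOn.smul (ContinuousOn.inv₀ (by fun_prop) fun p hp => hp) ?_
  exact (continuous_fst.sub (continuous_snd.smul (hoff.comp continuous_fst))).continuousOn

end PushToFace

section Pushforward

variable {ι κ : Type*} [Fintype ι] [Fintype κ] (g : ι → κ)

lemma sum_linearMap_apply (x : ι → ℝ) : ∑ j, linearMap ℝ ℝ g x j = ∑ i, x i := by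
  classical
  simp only [linearMap_apply_apply]
  exact sum_fiberwise univ g x

lemma le_linearMap_apply {x : ι → ℝ} (hx : ∀ i, 0 ≤ x i) (i : ι) :
    x i ≤ linearMap ℝ ℝ g x (g i) := by
  classical
  rw [linearMap_apply_apply]
  exact single_le_sum (fun k _ => hx k) (by simp)

lemma linearMap_indicator_preimage (T : Set κ) (x : ι → ℝ) :
    linearMap ℝ ℝ g ((g ⁻¹' T).indicator x) = T.indicator (linearMap ℝ ℝ g x) := by
  classical
  funext j
  simp only [linearMap_apply_apply, Set.indicator_apply, Set.mem_preimage]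
  split_ifs with hj
  · exact sum_congr rfl fun i hi => by simp [(mem_filter.1 hi).2, hj]
  · exact sum_eq_zero fun i hi => by simp [(mem_filter.1 hi).2, hj]

lemma massOff_preimage (J : Set κ) (x : ι → ℝ) :
    massOff (g ⁻¹' J) x = massOff J (linearMap ℝ ℝ g x) := by
  rw [massOff, massOff, ← Set.preimage_compl, ← linearMap_indicator_preimage, sum_linearMap_apply]

lemma linearMap_pushToFace (J : Set κ) (u : ℝ) (x : ι → ℝ) :
    linearMap ℝ ℝ g (pushToFace (g ⁻¹' J) u x) = pushToFace J u (linearMap ℝ ℝ g x) := by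
  rw [pushToFace, pushToFace, massOff_preimage, map_smul, map_sub, map_smul, ← Set.preimage_compl,
    linearMap_indicator_preimage]

lemma linearMap_mem_stdSimplex {x : ι → ℝ} (hx : x ∈ stdSimplex ℝ ι) :
    linearMap ℝ ℝ g x ∈ stdSimplex ℝ κ :=
  stdSimplex.image_linearMap g ⟨x, hx, rfl⟩

end Pushforward

section Star

variable {ι κ : Type*} [Fintype ι] [Fintype κ]

variable (g : ι → κ) (J : Set κ) in
def starPreimage : Set (ι → ℝ) :=
  {x ∈ stdSimplex ℝ ι |
    (∀ j, 0 < linearMap ℝ ℝ g x j) ∨ ∀ j, 0 < linearMap ℝ ℝ g x j ↔ j ∈ J}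

variable {g : ι → κ} {J : Set κ} {x : ι → ℝ} {u : ℝ}

lemma linearMap_pos_of_mem_starPreimage (hx : x ∈ starPreimage g J) {j : κ} (hj : j ∈ J) :
    0 < linearMap ℝ ℝ g x j := by
  rcases hx.2 with hpos | hface
  · exact hpos j
  · exact (hface j).2 hj

lemma massOff_lt_one_of_mem_starPreimage (hJ : J.Nonempty) (hx : x ∈ starPreimage g J) :
    massOff (g ⁻¹' J) x < 1 := by
  obtain ⟨j, hj⟩ := hJ
  rw [massOff_preimage]
  exact massOff_lt_one (linearMap_mem_stdSimplex g hx.1) hj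
    (linearMap_pos_of_mem_starPreimage hx hj)

lemma one_sub_mul_massOff_preimage_pos (hJ : J.Nonempty) (hx : x ∈ starPreimage g J)
    (hu : u ∈ I) : 0 < 1 - u * massOff (g ⁻¹' J) x :=
  one_sub_mul_massOff_pos hx.1.1 (massOff_lt_one_of_mem_starPreimage hJ hx) hu

lemma linearMap_pushToFace_pos_iff (hJ : J.Nonempty) (hx : x ∈ starPreimage g J) (hu : u ∈ I)
    (j : κ) :
    0 < linearMap ℝ ℝ g (pushToFace (g ⁻¹' J) u x) j ↔
      0 < linearMap ℝ ℝ g x j ∧ (j ∈ J ∨ u < 1) := by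
  rw [linearMap_pushToFace]
  refine pushToFace_pos_iff ((linearMap_mem_stdSimplex g hx.1).1 j) hu.2 ?_
  rw [← massOff_preimage]
  exact one_sub_mul_massOff_preimage_pos hJ hx hu

lemma linearMap_pushToFace_one_pos_iff (hJ : J.Nonempty) (hx : x ∈ starPreimage g J) (j : κ) :
    0 < linearMap ℝ ℝ g (pushToFace (g ⁻¹' J) 1 x) j ↔ j ∈ J := by
  rw [linearMap_pushToFace_pos_iff hJ hx ⟨zero_le_one, le_rfl⟩]
  simpa using linearMap_pos_of_mem_starPreimage hx

lemma pushToFace_mem_starPreimage (hJ : J.Nonempty) (hx : x ∈ starPreimage g J) (hu : u ∈ I) :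
    pushToFace (g ⁻¹' J) u x ∈ starPreimage g J := by
  refine ⟨pushToFace_mem_stdSimplex hx.1 hu (massOff_lt_one_of_mem_starPreimage hJ hx), ?_⟩
  rcases hu.2.lt_or_eq with hu1 | rfl
  · simpa [linearMap_pushToFace_pos_iff hJ hx hu, hu1] using hx.2
  · exact .inr (linearMap_pushToFace_one_pos_iff hJ hx)

lemma pushToFace_eq_self_of_face (hx : x ∈ stdSimplex ℝ ι)
    (hface : ∀ j, 0 < linearMap ℝ ℝ g x j ↔ j ∈ J) (u : ℝ) :
    pushToFace (g ⁻¹' J) u x = x :=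
  pushToFace_eq_self (fun i hi => le_antisymm
    (not_lt.1 fun h => hi ((hface (g i)).1 (h.trans_le (le_linearMap_apply g hx.1 i)))) (hx.1 i)) u

end Star

theorem preimage_star_deformation_retracts_general
    {ι κ : Type*} [Fintype ι] [Fintype κ] [DecidableEq κ]
    (g : ι → κ)
    (F : (ι → ℝ) → (κ → ℝ))
    (hF : ∀ x j, F x j = ∑ i ∈ Finset.univ.filter (fun i => g i = j), x i)
    (J : Set κ) (hJne : J.Nonempty)
    (Ω : Set (ι → ℝ))
    (hΩ : Ω = {x ∈ stdSimplex ℝ ι | (∀ j, 0 < F x j) ∨ (∀ j, 0 < F x j ↔ j ∈ J)})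
    (SJ : Set (ι → ℝ))
    (hSJ : SJ = {x ∈ Ω | ∀ j, 0 < F x j ↔ j ∈ J}) :
    ∃ H : (Ω × unitInterval) → Ω,
      Continuous H ∧
      (∀ x : Ω, H (x, 0) = x) ∧
      (∀ x : Ω, ((H (x, 1) : ι → ℝ)) ∈ SJ) ∧
      (∀ x : Ω, (x : ι → ℝ) ∈ SJ → ∀ u : unitInterval, H (x, u) = x) := by
  obtain rfl : F = linearMap ℝ ℝ g :=
    funext fun x => funext fun j => (hF x j).trans (linearMap_apply_apply ..).symm
  change Ω = starPreimage g J at hΩ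
  subst hΩ hSJ
  have hmem (x : starPreimage g J) (u : I) : pushToFace (g ⁻¹' J) u x ∈ starPreimage g J :=
    pushToFace_mem_starPreimage hJne x.2 u.2
  refine ⟨fun p => ⟨pushToFace (g ⁻¹' J) p.2 p.1, hmem p.1 p.2⟩, ?_, ?_, ?_, ?_⟩
  · refine (continuousOn_pushToFace.comp_continuous
      (f := fun p : starPreimage g J × I => ((p.1 : ι → ℝ), (p.2 : ℝ))) (by fun_prop)
      fun p => ?_).subtype_mk _
    exact (one_sub_mul_massOff_preimage_pos hJne p.1.2 p.2.2).ne'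
  · exact fun x => Subtype.ext (pushToFace_zero _)
  · exact fun x => ⟨hmem x 1, linearMap_pushToFace_one_pos_iff hJne x.2⟩
  · rintro x ⟨-, hface⟩ u
    exact Subtype.ext (pushToFace_eq_self_of_face x.2.1 hface u)

/-- Single-simplex star retraction. With `Ω` the preimage under the
induced projection of the union of the open top simplex and the open face
determined by a nonempty proper subset `J ⊊ κ`, and `SJ` the preimage of the open
face, `SJ` is a strong deformation retract of `Ω`. -/
theorem preimage_star_deformation_retracts
    {ι κ : Type*} [Fintype ι] [Fintype κ] [Nonempty ι] [Nonempty κ] [DecidableEq κ]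
    (g : ι → κ) (hg : Function.Surjective g)
    (F : (ι → ℝ) → (κ → ℝ))
    (hF : ∀ x j, F x j = ∑ i ∈ Finset.univ.filter (fun i => g i = j), x i)
    (J : Set κ) (hJne : J.Nonempty) (hJprop : J ≠ Set.univ)
    (Ω : Set (ι → ℝ))
    (hΩ : Ω = {x ∈ stdSimplex ℝ ι | (∀ j, 0 < F x j) ∨ (∀ j, 0 < F x j ↔ j ∈ J)})
    (SJ : Set (ι → ℝ))
    (hSJ : SJ = {x ∈ Ω | ∀ j, 0 < F x j ↔ j ∈ J}) :
    ∃ H : (Ω × unitInterval) → Ω,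
      Continuous H ∧
      (∀ x : Ω, H (x, 0) = x) ∧
      (∀ x : Ω, ((H (x, 1) : ι → ℝ)) ∈ SJ) ∧
      (∀ x : Ω, (x : ι → ℝ) ∈ SJ → ∀ u : unitInterval, H (x, u) = x) :=
  preimage_star_deformation_retracts_general g F hF J hJne Ω hΩ SJ hSJ
end

section
/- Let E be a real inner product space and let m, m' ∈ E be unit vectors (‖m‖ = ‖m'‖ = 1). Then for all real numbers 0 ≤ t ≤ s: ‖t•m − s•m'‖ ≤ t·‖m − m'‖ + (s − t) ≤ √2 · ‖t•m − s•m'‖. Hence on the cone over a subset of the unit sphere, the cone distance formula min(t,s)·dist(m,m') + |t − s| and the ambient Euclidean distance ‖t•m − s•m'‖ are Lipschitz equivalent with constant √2. -/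
/-!
The upper bound is the triangle inequality for `t • m - s • m' = t • (m - m') - (s - t) • m'`.
For the lower bound, expanding inner products gives, for unit vectors,
`‖t • m - s • m'‖² = (s - t)² + t s ‖m - m'‖²`, which dominates `(s - t)² + (t ‖m - m'‖)²`
as soon as `0 ≤ t ≤ s`; and `(a + b)² ≤ 2 (a² + b²)`.
-/

theorem norm_smul_sub_smul_le_of_le {E : Type*} [NormedAddCommGroup E] [NormedSpace ℝ E]
    (m m' : E) {t s : ℝ} (ht : 0 ≤ t) (hts : t ≤ s) :
    ‖t • m - s • m'‖ ≤ t * ‖m - m'‖ + (s - t) * ‖m'‖ := by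
  have hsplit : t • m - s • m' = t • (m - m') - (s - t) • m' := by
    rw [smul_sub, sub_smul]; abel
  calc ‖t • m - s • m'‖ ≤ ‖t • (m - m')‖ + ‖(s - t) • m'‖ := hsplit ▸ norm_sub_le _ _
    _ = t * ‖m - m'‖ + (s - t) * ‖m'‖ := by
      rw [norm_smul_of_nonneg ht, norm_smul_of_nonneg (sub_nonneg.2 hts)]

section InnerProductSpace

variable {E : Type*} [NormedAddCommGroup E] [InnerProductSpace ℝ E] {m m' : E}

theorem norm_smul_sub_smul_sq_of_norm_eq_one (hm : ‖m‖ = 1) (hm' : ‖m'‖ = 1) (t s : ℝ) :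
    ‖t • m - s • m'‖ ^ 2 = (s - t) ^ 2 + t * s * ‖m - m'‖ ^ 2 := by
  rw [norm_sub_sq_real, norm_sub_sq_real, norm_smul, norm_smul, real_inner_smul_left,
    real_inner_smul_right, hm, hm', Real.norm_eq_abs, Real.norm_eq_abs, mul_pow, mul_pow,
    sq_abs, sq_abs]
  ring

theorem mul_norm_sub_add_sub_le_sqrt_two_mul_norm (hm : ‖m‖ = 1) (hm' : ‖m'‖ = 1) {t s : ℝ}
    (ht : 0 ≤ t) (hts : t ≤ s) :
    t * ‖m - m'‖ + (s - t) ≤ √2 * ‖t • m - s • m'‖ := by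
  have hsq : (t * ‖m - m'‖) ^ 2 + (s - t) ^ 2 ≤ ‖t • m - s • m'‖ ^ 2 := by
    rw [norm_smul_sub_smul_sq_of_norm_eq_one hm hm', mul_pow, add_comm]
    gcongr
    exact sq t ▸ mul_le_mul_of_nonneg_left hts ht
  calc t * ‖m - m'‖ + (s - t) ≤ √(2 * ((t * ‖m - m'‖) ^ 2 + (s - t) ^ 2)) :=
        Real.le_sqrt_of_sq_le add_sq_le
    _ ≤ √(2 * ‖t • m - s • m'‖ ^ 2) := by gcongr
    _ = √2 * ‖t • m - s • m'‖ := by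
      rw [Real.sqrt_mul zero_le_two, Real.sqrt_sq (norm_nonneg _)]

end InnerProductSpace

/-- For unit vectors `m, m'` in a real inner product space and
`0 ≤ t ≤ s`, the cone distance `t·‖m − m'‖ + (s − t)` and the ambient distance
`‖t•m − s•m'‖` are Lipschitz equivalent with constant `√2`. -/
theorem cone_dist_lipschitz_equiv_euclidean
    {E : Type*} [NormedAddCommGroup E] [InnerProductSpace ℝ E]
    (m m' : E) (hm : ‖m‖ = 1) (hm' : ‖m'‖ = 1)
    (t s : ℝ) (ht : 0 ≤ t) (hts : t ≤ s) :
    ‖t • m - s • m'‖ ≤ t * ‖m - m'‖ + (s - t) ∧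
    t * ‖m - m'‖ + (s - t) ≤ Real.sqrt 2 * ‖t • m - s • m'‖ :=
  ⟨by simpa [hm'] using norm_smul_sub_smul_le_of_le m m' ht hts,
    mul_norm_sub_add_sub_le_sqrt_two_mul_norm hm hm' ht hts⟩
end

section
/- For n ≥ 1, let Δⁿ = {x ∈ EuclideanSpace ℝ (Fin (n+1)) | ∀ i, 0 ≤ x i, and ∑ i, x i = 1} and let b ∈ Δⁿ be its barycenter, b i = 1/(n+1) for all i. Let ∂Δⁿ = {x ∈ Δⁿ | ∃ i, x i = 0} be the boundary of Δⁿ. Then the infimum distance from the barycenter to the boundary equals 1/√(n(n+1)): Metric.infDist b ∂Δⁿ = 1/√(n(n+1)). -/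
/-!
On the hyperplane `∑ i, x i = 1` the squared distance to the barycenter `b` is
`‖x‖² - 1/(n+1)`. A boundary point has a vanishing coordinate, so its remaining `n`
coordinates sum to `1` and, by Cauchy–Schwarz, `‖x‖² ≥ 1/n`, with equality at the
barycenter of a facet. Hence the distance is `√(1/n - 1/(n+1)) = 1/√(n(n+1))`.
-/

open Finset

theorem one_div_card_le_sum_sq {ι : Type*} {s : Finset ι} {x : ι → ℝ}
    (hx : ∑ i ∈ s, x i = 1) : 1 / (#s : ℝ) ≤ ∑ i ∈ s, x i ^ 2 := by
  have h := sq_sum_le_card_mul_sum_sq (s := s) (f := x)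
  rw [hx, one_pow] at h
  exact div_le_of_le_mul₀ (Nat.cast_nonneg _) (sum_nonneg fun i _ => sq_nonneg _) (by linarith)

section

variable {ι : Type*} [Fintype ι]

theorem dist_sq_eq_norm_sq_sub_of_sum_eq_one {x b : EuclideanSpace ℝ ι} {c : ℝ}
    (hb : ∀ i, b i = c) (hc : Fintype.card ι * c = 1) (hx : ∑ i, x i = 1) :
    dist x b ^ 2 = ‖x‖ ^ 2 - c := by
  simp only [EuclideanSpace.dist_sq_eq, EuclideanSpace.real_norm_sq_eq, Real.dist_eq, sq_abs,
    hb, sub_sq, sum_add_distrib, sum_sub_distrib, ← sum_mul, ← mul_sum, hx, sum_const,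
    card_univ, nsmul_eq_mul]
  linear_combination c * hc

theorem one_div_card_sub_one_le_norm_sq {x : EuclideanSpace ℝ ι} (hx : ∑ i, x i = 1)
    {i₀ : ι} (hi₀ : x i₀ = 0) : 1 / (Fintype.card ι - 1 : ℝ) ≤ ‖x‖ ^ 2 := by
  classical
  have hsum : ∑ i ∈ univ.erase i₀, x i = 1 := by rwa [sum_erase _ hi₀]
  have hcard : (#(univ.erase i₀) : ℝ) = Fintype.card ι - 1 := by
    rw [card_erase_of_mem (mem_univ _), card_univ,
      Nat.cast_pred (Fintype.card_pos_iff.mpr ⟨i₀⟩)]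
  calc 1 / (Fintype.card ι - 1 : ℝ) ≤ ∑ i ∈ univ.erase i₀, x i ^ 2 :=
        hcard ▸ one_div_card_le_sum_sq hsum
    _ = ‖x‖ ^ 2 := by
        rw [sum_erase _ (by rw [hi₀]; ring), EuclideanSpace.real_norm_sq_eq]

section facet

variable [DecidableEq ι]

theorem sum_ite_eq_zero_else_const (i₀ : ι) (a : ℝ) :
    ∑ i, (if i = i₀ then 0 else a) = (Fintype.card ι - 1 : ℝ) * a := by
  simp only [sum_ite, sum_const_zero, filter_ne', sum_const, card_erase_of_mem (mem_univ _),
    card_univ, nsmul_eq_mul, zero_add, Nat.cast_pred (Fintype.card_pos_iff.mpr ⟨i₀⟩)]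

noncomputable def facetBarycenter (i₀ : ι) : EuclideanSpace ℝ ι :=
  WithLp.toLp 2 fun i => if i = i₀ then 0 else 1 / (Fintype.card ι - 1 : ℝ)

@[simp]
theorem facetBarycenter_apply (i₀ i : ι) :
    facetBarycenter i₀ i = if i = i₀ then 0 else 1 / (Fintype.card ι - 1 : ℝ) :=
  rfl

theorem facetBarycenter_nonneg (i₀ i : ι) : 0 ≤ facetBarycenter i₀ i := by
  have : (1 : ℝ) ≤ Fintype.card ι := by exact_mod_cast Fintype.card_pos_iff.mpr ⟨i⟩
  rw [facetBarycenter_apply]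
  split_ifs <;> simp only [le_refl, one_div, inv_nonneg, sub_nonneg, this]

theorem sum_facetBarycenter (h : 1 < Fintype.card ι) (i₀ : ι) :
    ∑ i, facetBarycenter i₀ i = 1 := by
  have : (Fintype.card ι - 1 : ℝ) ≠ 0 := sub_ne_zero.2 (by exact_mod_cast h.ne')
  simp only [facetBarycenter_apply, sum_ite_eq_zero_else_const]
  field_simp

theorem norm_sq_facetBarycenter (i₀ : ι) :
    ‖facetBarycenter i₀‖ ^ 2 = 1 / (Fintype.card ι - 1 : ℝ) := by
  simp only [EuclideanSpace.real_norm_sq_eq, facetBarycenter_apply, ite_pow, ne_eq,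
    OfNat.ofNat_ne_zero, not_false_eq_true, zero_pow, sum_ite_eq_zero_else_const]
  rcases eq_or_ne (Fintype.card ι - 1 : ℝ) 0 with h | h
  · simp [h]
  · field_simp

end facet

theorem infDist_barycenter_boundary (h : 1 < Fintype.card ι) {b : EuclideanSpace ℝ ι}
    (hb : ∀ i, b i = 1 / Fintype.card ι) :
    Metric.infDist b {x : EuclideanSpace ℝ ι | ((∀ i, 0 ≤ x i) ∧ ∑ i, x i = 1) ∧ ∃ i, x i = 0} =
      √(1 / (Fintype.card ι - 1 : ℝ) - 1 / Fintype.card ι) := by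
  classical
  obtain ⟨i₀⟩ : Nonempty ι := Fintype.card_pos_iff.mp (by omega)
  have hc : (Fintype.card ι : ℝ) * (1 / Fintype.card ι) = 1 :=
    mul_one_div_cancel (by positivity)
  have hdist : ∀ x : EuclideanSpace ℝ ι, ∑ i, x i = 1 →
      dist b x = √(‖x‖ ^ 2 - 1 / Fintype.card ι) := fun x hx => by
    rw [← dist_sq_eq_norm_sq_sub_of_sum_eq_one hb hc hx, Real.sqrt_sq dist_nonneg, dist_comm]
  have hmem : facetBarycenter i₀ ∈
      {x : EuclideanSpace ℝ ι | ((∀ i, 0 ≤ x i) ∧ ∑ i, x i = 1) ∧ ∃ i, x i = 0} :=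
    ⟨⟨facetBarycenter_nonneg i₀, sum_facetBarycenter h i₀⟩, i₀, by simp⟩
  apply le_antisymm
  · calc _ ≤ dist b (facetBarycenter i₀) := Metric.infDist_le_dist_of_mem hmem
      _ = _ := by rw [hdist _ hmem.1.2, norm_sq_facetBarycenter]
  · refine (Metric.le_infDist ⟨_, hmem⟩).2 fun x ⟨⟨_, hx⟩, i, hi⟩ => ?_
    rw [hdist x hx]
    exact Real.sqrt_le_sqrt (by linarith [one_div_card_sub_one_le_norm_sq hx hi])

end

/-- For `n ≥ 1`, the distance in the Euclidean (ℓ²) metric from the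
barycenter of the standard `n`-simplex to its boundary is `1/√(n(n+1))`. -/
theorem infDist_barycenter_boundary_stdSimplex (n : ℕ) (hn : 1 ≤ n)
    (b : EuclideanSpace ℝ (Fin (n + 1))) (hb : ∀ i, b i = 1 / (n + 1)) :
    Metric.infDist b
      ({x : EuclideanSpace ℝ (Fin (n + 1)) |
          ((∀ i, 0 ≤ x i) ∧ ∑ i, x i = 1) ∧ ∃ i, x i = 0}) =
      1 / Real.sqrt (n * (n + 1)) := by
  rw [infDist_barycenter_boundary (by rw [Fintype.card_fin]; omega) (by simpa using hb)]
  simp only [Fintype.card_fin, Nat.cast_add, Nat.cast_one, add_sub_cancel_right]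
  have : 1 / (n : ℝ) - 1 / (n + 1) = 1 / (n * (n + 1)) := by field_simp; ring
  rw [this, one_div, one_div, Real.sqrt_inv]
end
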